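/- The partitions P₁ = {{1,2,3}} and P₂ = {{2,4}} belong to eNNC₄, but their meet in NNC₄, namely P₁ ∧ P₂ = {B ∩ B' : B ∈ P₁, B' ∈ P₂, B ∩ B' ≠ ∅} = {{2}}, does not belong to eNNC₄. In particular, eNNC₄ is not closed under the meet operation of NNC₄, so eNNC₄ is not a sublattice of NNC₄. -/

import Mathlib

/-! Non-exhaustive non-crossing partitions. For `m ≥ 1` we write `[m] = {1, …, m}`,
realised as `Set.Icc 1 m ⊆ ℕ`. -/

/-- `P` is a non-exhaustive non-crossing partition of `[m]`: a collection of pairwise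
disjoint nonempty subsets of `[m]` (blocks) such that whenever `i < k < j < l` with
`i, j` in a block `B` and `k, l` in a block `B'`, then `B = B'`. -/
def IsNNC (m : ℕ) (P : Set (Set ℕ)) : Prop :=
  (∀ B ∈ P, B.Nonempty ∧ B ⊆ Set.Icc 1 m) ∧
  (∀ B ∈ P, ∀ B' ∈ P, B ≠ B' → Disjoint B B') ∧
  (∀ B ∈ P, ∀ B' ∈ P, ∀ i k j l : ℕ, i < k → k < j → j < l →
    i ∈ B → j ∈ B → k ∈ B' → l ∈ B' → B = B')

/-- `P` is an even-exclusive non-exhaustive non-crossing partition of `[m]`: an element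
of `NNC_m` having no singleton block `{i}` with `i` even. -/
def IsENNC (m : ℕ) (P : Set (Set ℕ)) : Prop :=
  IsNNC m P ∧ ∀ i : ℕ, Even i → ({i} : Set ℕ) ∉ P

/-- `P` refines `Q`: every block of `P` is contained in some block of `Q`. -/
def Refines (P Q : Set (Set ℕ)) : Prop :=
  ∀ B ∈ P, ∃ B' ∈ Q, B ⊆ B'

section SingleBlock

variable {m : ℕ} {B : Set ℕ}

theorem isNNC_singleton (hB : B.Nonempty) (hBm : B ⊆ Set.Icc 1 m) : IsNNC m {B} := by
  refine ⟨?_, ?_, ?_⟩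
  · rintro _ rfl
    exact ⟨hB, hBm⟩
  · rintro _ rfl _ rfl hne
    exact absurd rfl hne
  · rintro _ rfl _ rfl _ _ _ _ _ _ _ _ _ _ _
    rfl

theorem isENNC_singleton_of_nontrivial (hB : B.Nontrivial) (hBm : B ⊆ Set.Icc 1 m) :
    IsENNC m {B} :=
  ⟨isNNC_singleton hB.nonempty hBm,
    fun _ _ hi => hB.ne_singleton (Set.mem_singleton_iff.mp hi).symm⟩

theorem not_isENNC_singleton_singleton_of_even {i : ℕ} (hi : Even i) : ¬ IsENNC m {{i}} :=
  fun h => h.2 i hi rfl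

end SingleBlock

/-- The meet `P ∧ P'` of `NNC_m`. -/
def blockMeet {α : Type*} (P Q : Set (Set α)) : Set (Set α) :=
  {C | ∃ B ∈ P, ∃ B' ∈ Q, C = B ∩ B' ∧ C ≠ ∅}

theorem blockMeet_singleton_singleton {α : Type*} {B B' : Set α} (h : (B ∩ B').Nonempty) :
    blockMeet {B} {B'} = {B ∩ B'} := by
  ext C
  simp only [blockMeet, Set.mem_ofPred_eq, Set.mem_singleton_iff, exists_eq_left]
  exact ⟨And.left, fun hC => ⟨hC, hC ▸ h.ne_empty⟩⟩

/-- Example 4.9 of the paper: the partitions `P₁ = {{1,2,3}}` and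
`P₂ = {{2,4}}` belong to `eNNC₄`, but their meet in `NNC₄`, namely
`P₁ ∧ P₂ = {B ∩ B' : B ∈ P₁, B' ∈ P₂, B ∩ B' ≠ ∅} = {{2}}`, does not belong to `eNNC₄`.
In particular `eNNC₄` is not closed under the meet of `NNC₄`, so it is not a sublattice
of `NNC₄`. -/
theorem eNNC_not_closed_under_meet :
    IsENNC 4 ({{1, 2, 3}} : Set (Set ℕ)) ∧
    IsENNC 4 ({{2, 4}} : Set (Set ℕ)) ∧
    {C : Set ℕ | ∃ B ∈ ({{1, 2, 3}} : Set (Set ℕ)), ∃ B' ∈ ({{2, 4}} : Set (Set ℕ)),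
        C = B ∩ B' ∧ C ≠ ∅} = ({{2}} : Set (Set ℕ)) ∧
    ¬ IsENNC 4 ({{2}} : Set (Set ℕ)) := by
  have hmeet : ({1, 2, 3} ∩ {2, 4} : Set ℕ) = {2} := by
    ext x
    simp only [Set.mem_inter_iff, Set.mem_insert_iff, Set.mem_singleton_iff]
    omega
  refine ⟨isENNC_singleton_of_nontrivial ?_ ?_, isENNC_singleton_of_nontrivial ?_ ?_, ?_,
    not_isENNC_singleton_singleton_of_even even_two⟩
  · exact ⟨1, by simp, 2, by simp, by decide⟩
  · simp [Set.insert_subset_iff]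
  · exact Set.nontrivial_pair (by decide)
  · simp [Set.insert_subset_iff]
  · rw [← hmeet]
    exact blockMeet_singleton_singleton (by simp [hmeet])
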